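/- Let S1, S2 ∈ Σ^n \ H_{n,k} with Ham(S1,S2) ≤ k, and let S' be the string of length n over the extended alphabet Σ ⊔ {$_1,…,$_n} (where $_1,…,$_n are pairwise distinct symbols not in Σ) defined by S'[i] = S1[i] if S1[i] = S2[i] and S'[i] = $_i otherwise. Then P(S') ⊆ P(S1), τ_{S',i} ≤ τ_{S1,i} for every i ∈ P(S') (so f_c(S') is well-defined), and f_c(S') ⊆ (f_c(S1) ∩ f_c(S2)) ∪ MP(S1,S2), where MP(S1,S2) = {i ∈ [1..n] : S1[i] ≠ S2[i]}. -/

import Mathlib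

open Finset
open scoped Classical

noncomputable section

variable {α : Type*}

/-- `i ↻ n`: 1-indexed wrap-around of an (integer) position. -/
def zwrap (n : ℕ) (i : ℤ) : ℕ := ((i - 1) % (n : ℤ)).toNat + 1

/-- `S*[i]`: the infinite cyclic extension of the length-`n` string `S` (1-indexed). -/
def cext (n : ℕ) (S : ℕ → α) (i : ℕ) : α := S ((i - 1) % n + 1)

/-- The fragment `S*[a..]`, i.e. the string `w` with `w[j] = S*[a+j-1]`. -/
def frag (n : ℕ) (S : ℕ → α) (a : ℕ) : ℕ → α := fun j => cext n S (a + j - 1)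

/-- Hamming distance restricted to positions `[a..b]` (1-indexed strings). -/
def hamIcc (a b : ℕ) (S T : ℕ → α) : ℕ := ((Finset.Icc a b).filter fun j => S j ≠ T j).card

/-- Hamming distance between two length-`n` strings. -/
def ham (n : ℕ) (S T : ℕ → α) : ℕ := hamIcc 1 n S T

/-- `p` is a period of the length-`L` string `w` (1-indexed). -/
def IsPeriod (L : ℕ) (w : ℕ → α) (p : ℕ) : Prop :=
  1 ≤ p ∧ ∀ j, 1 ≤ j → j + p ≤ L → w j = w (j + p)

/-- `per(w)`: the shortest period of the length-`L` string `w`. -/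
def per (L : ℕ) (w : ℕ → α) : ℕ := sInf {p | IsPeriod L w p}

/-- `root(S)`: the length of the primitive root of the length-`n` string `S`,
i.e. the least length of a string `Q` with `S = Q^α`. -/
def root (n : ℕ) (S : ℕ → α) : ℕ := sInf {r | r ∣ n ∧ IsPeriod n S r}

/-- `S` is `(a,b)`-pseudo-periodic: it has an `(a,b)`-base. -/
def PseudoPeriodic (n : ℕ) (a b : ℝ) (S : ℕ → α) : Prop :=
  ∃ S' : ℕ → α, (root n S' : ℝ) ≤ (n : ℝ) / a ∧ (ham n S S' : ℝ) ≤ b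

/-- `cyc(S)`: left cyclic rotation, `cyc(S)[i] = S*[i+1]`. -/
def cyc (n : ℕ) (S : ℕ → α) : ℕ → α := fun i => cext n S (i + 1)

/-- `cyc^m(S)` for an integer `m`: `cyc^m(S)[i] = S*[i+m]` (cyclically). -/
def cycZ (n : ℕ) (m : ℤ) (S : ℕ → α) : ℕ → α := fun i => S (zwrap n ((i : ℤ) + m))

/-- `rot_n(P) = {(i-1) ↻ n : i ∈ P}`. -/
def rotSet (n : ℕ) (P : Finset ℕ) : Finset ℕ := P.image fun i => zwrap n ((i : ℤ) - 1)

/-- `ρ_{S,i} = per(S*[i..i+3ℓ-1])`. -/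
def rho (n ℓ : ℕ) (S : ℕ → α) (i : ℕ) : ℕ := per (3 * ℓ) (frag n S i)

/-- `μ_{S,i}*`: the infinite periodic extension of `μ_{S,i} = S*[i..i+ρ_{S,i}-1]` (1-indexed). -/
def muExt (n ℓ : ℕ) (S : ℕ → α) (i : ℕ) : ℕ → α :=
  fun j => cext n S (i + (j - 1) % rho n ℓ S i)

/-- `P(S)`: the set of cubic positions of `S`. -/
def cubicSet (n ℓ : ℕ) (S : ℕ → α) : Finset ℕ :=
  (Finset.Icc 1 n).filter fun i => rho n ℓ S i ≤ ℓ

/-- The defining set of `τ_{S,i}`: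
`{τ ≥ 1 : τ < (n/(γk))·Ham(S*[i..i+τ-1], μ_{S,i}*[1..τ])}`. -/
def tauSet (n ℓ k : ℕ) (γ : ℝ) (S : ℕ → α) (i : ℕ) : Set ℕ :=
  {τ | 1 ≤ τ ∧ (τ : ℝ) < (n : ℝ) / (γ * k) * (hamIcc 1 τ (frag n S i) (muExt n ℓ S i) : ℝ)}

/-- `τ_{S,i}`. -/
def tau (n ℓ k : ℕ) (γ : ℝ) (S : ℕ → α) (i : ℕ) : ℕ := sInf (tauSet n ℓ k γ S i)

/-- `R_{S,i} = [i..i+τ_{S,i}-1]`. -/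
def Rset (n ℓ k : ℕ) (γ : ℝ) (S : ℕ → α) (i : ℕ) : Finset ℕ :=
  Finset.Icc i (i + tau n ℓ k γ S i - 1)

/-- `M_{S,i} = {j ∈ R_{S,i} : S*[j] ≠ μ_{S,i}*[j-i+1]}`. -/
def Mset (n ℓ k : ℕ) (γ : ℝ) (S : ℕ → α) (i : ℕ) : Finset ℕ :=
  (Rset n ℓ k γ S i).filter fun j => cext n S j ≠ muExt n ℓ S i (j - i + 1)

/-- `A_{S,i} = {j ∈ R_{S,i} : [j..j+2ℓ-1] ⊆ R_{S,i} \ M_{S,i}}`. -/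
def Aset (n ℓ k : ℕ) (γ : ℝ) (S : ℕ → α) (i : ℕ) : Finset ℕ :=
  (Rset n ℓ k γ S i).filter fun j =>
    Finset.Icc j (j + 2 * ℓ - 1) ⊆ Rset n ℓ k γ S i \ Mset n ℓ k γ S i

/-- `f_c(S) = ∪_{i ∈ P(S)} {j ↻ n : j ∈ M_{S,i}}`. -/
def fc (n ℓ k : ℕ) (γ : ℝ) (S : ℕ → α) : Finset ℕ :=
  (cubicSet n ℓ S).biUnion fun i => (Mset n ℓ k γ S i).image fun j => zwrap n (j : ℤ)

/-!
A sentinel `$_m` occurs in `S'*` only at positions `≡ m (mod n)`, so it never recurs at a distance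
`0 < p < n`; hence a cubic window of `S'` contains no sentinel, it is a window of `S1` and of `S2`,
and it has the same period and the same `μ`. Every mismatch of `S1` against `μ` stays a mismatch of
`S'`, so the set defining `τ_{S1,i}` is contained in the one defining `τ_{S',i}`; it is nonempty
because `S1` is not pseudo-periodic. Finally, a mismatch of `S'` at a non-sentinel position is a
mismatch of both `S1` and `S2`, inside their (longer) ranges `R`.
-/

open Function

theorem Function.Periodic.nat_gcd {β : Type*} {f : ℕ → β} {a b : ℕ}
    (ha : Periodic f a) (hb : Periodic f b) : Periodic f (a.gcd b) := by
  induction a, b using Nat.gcd.induction with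
  | H0 b => simpa using hb
  | H1 a b _ ih =>
    rw [Nat.gcd_rec]
    refine ih (fun x => ?_) ha
    calc f (x + b % a) = f (x + b % a + (b / a) * a) := ((ha.nat_mul (b / a)) _).symm
      _ = f (x + b) := by rw [add_assoc, mul_comm, Nat.mod_add_div]
      _ = f x := hb x

lemma isPeriod_of_periodic {L p : ℕ} {w : ℕ → α} (hw : Periodic w p) (hp : 1 ≤ p) :
    IsPeriod L w p :=
  ⟨hp, fun j _ _ => (hw j).symm⟩

lemma isPeriod_succ_self (L : ℕ) (w : ℕ → α) : IsPeriod L w (L + 1) :=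
  ⟨by omega, fun _ _ _ => by omega⟩

lemma per_isPeriod (L : ℕ) (w : ℕ → α) : IsPeriod L w (per L w) :=
  Nat.sInf_mem (s := {p | IsPeriod L w p}) ⟨L + 1, isPeriod_succ_self L w⟩

lemma isPeriod_congr {β : Type*} {L p : ℕ} {w : ℕ → α} {w' : ℕ → β} {f : α → β}
    (hf : Injective f) (h : ∀ j, 1 ≤ j → j ≤ L → w' j = f (w j)) :
    IsPeriod L w' p ↔ IsPeriod L w p := by
  refine and_congr_right fun hp => forall_congr' fun j => forall_congr' fun hj =>
    forall_congr' fun hjp => ?_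
  rw [h j hj (by omega), h (j + p) (by omega) hjp, hf.eq_iff]

lemma per_congr {β : Type*} {L : ℕ} {w : ℕ → α} {w' : ℕ → β} {f : α → β}
    (hf : Injective f) (h : ∀ j, 1 ≤ j → j ≤ L → w' j = f (w j)) : per L w' = per L w :=
  congrArg sInf (Set.ext fun _ => isPeriod_congr hf h)

lemma root_le {n r : ℕ} {S : ℕ → α} (hr : r ∣ n) (hS : IsPeriod n S r) : root n S ≤ r :=
  Nat.sInf_le ⟨hr, hS⟩

lemma one_le_rho (n ℓ : ℕ) (S : ℕ → α) (i : ℕ) : 1 ≤ rho n ℓ S i :=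
  (per_isPeriod _ _).1

lemma cext_add_self (n : ℕ) (S : ℕ → α) {m : ℕ} (hm : 1 ≤ m) : cext n S (m + n) = cext n S m := by
  unfold cext
  rw [show m + n - 1 = m - 1 + n by omega, Nat.add_mod_right]

lemma periodic_frag (n : ℕ) (S : ℕ → α) {i : ℕ} (hi : 1 ≤ i) :
    Periodic (fun x => frag n S i (x + 1)) n := fun x => by
  simp only [frag]
  rw [show i + (x + n + 1) - 1 = i + (x + 1) - 1 + n by omega]
  exact cext_add_self n S (by omega)

lemma periodic_muExt (n ℓ : ℕ) (S : ℕ → α) (i : ℕ) :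
    Periodic (fun x => muExt n ℓ S i (x + 1)) (rho n ℓ S i) := fun x => by
  simp only [muExt, Nat.add_sub_cancel, Nat.add_mod_right]

lemma periodic_ne {β : Type*} {u v : ℕ → β} {p : ℕ} (hu : Periodic u p) (hv : Periodic v p) :
    Periodic (fun x => u x ≠ v x) p := fun x => by
  simp only [hu x, hv x]

lemma hamIcc_one_eq_count (τ : ℕ) (f g : ℕ → α) :
    hamIcc 1 τ f g = Nat.count (fun x => f (x + 1) ≠ g (x + 1)) τ := by
  rw [Nat.count_eq_card_filter_range, hamIcc]
  refine card_nbij' (· - 1) (· + 1) ?_ ?_ ?_ ?_ <;> intro j hj <;>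
    simp only [coe_filter, mem_Icc, mem_range, Set.mem_ofPred_eq] at hj ⊢
  · exact ⟨by omega, by rw [Nat.sub_add_cancel hj.1.1]; exact hj.2⟩
  · exact ⟨by omega, hj.2⟩
  · omega
  · omega

lemma card_filter_Icc_add_eq_count {D : ℕ → Prop} [DecidablePred D] {n : ℕ} (hD : Periodic D n)
    (c : ℕ) : #{m ∈ Icc 1 n | D (m + c)} = Nat.count D n := by
  rw [← Nat.filter_Ico_card_eq_of_periodic (c + 1) n D hD]
  refine card_nbij' (· + c) (· - c) ?_ ?_ ?_ ?_ <;> intro j hj <;>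
    simp only [coe_filter, mem_Icc, mem_Ico, Set.mem_ofPred_eq] at hj ⊢
  · exact ⟨by omega, hj.2⟩
  · exact ⟨by omega, by rw [Nat.sub_add_cancel (by omega)]; exact hj.2⟩
  · omega
  · omega

/-- For every `t`, one of the positions `x + t p`, `x + t p + n` is a mismatch, since `u` agrees
there and `v` does not. -/
lemma le_two_mul_count_ne {β : Type*} {u v : ℕ → β} {n p x : ℕ} (hu : Periodic u n)
    (hv : Periodic v p) (hp : 0 < p) (hx : v (x + n) ≠ v x) (T : ℕ) :
    T ≤ 2 * Nat.count (fun y => u y ≠ v y) (x + T * p + n) := by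
  have hmismatch : ∀ t, u (x + t * p) ≠ v (x + t * p) ∨ u (x + t * p + n) ≠ v (x + t * p + n) := by
    intro t
    by_contra! h
    apply hx
    calc v (x + n) = v (x + t * p + n) := by
          rw [show x + t * p + n = x + n + t * p by ring]
          simpa using ((hv.nat_mul t) (x + n)).symm
      _ = u (x + t * p) := by rw [← h.2, hu]
      _ = v x := by rw [h.1]; simpa using (hv.nat_mul t) x
  have hinj : ∀ c, Set.InjOn (fun t => x + t * p + c) (range T) := fun c t₁ _ t₂ _ h =>
    Nat.eq_of_mul_eq_mul_right hp (by simpa using h)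
  have hcount : ∀ c ≤ n, #{t ∈ range T | u (x + t * p + c) ≠ v (x + t * p + c)} ≤
      Nat.count (fun y => u y ≠ v y) (x + T * p + n) := by
    intro c hc
    rw [Nat.count_eq_card_filter_range]
    refine card_le_card_of_injOn (fun t => x + t * p + c) (fun t ht => ?_) ((hinj c).mono ?_)
    · simp only [coe_filter, mem_range, Set.mem_ofPred_eq] at ht ⊢
      refine ⟨?_, ht.2⟩
      have : (t + 1) * p ≤ T * p := Nat.mul_le_mul_right p ht.1
      rw [add_mul] at this
      omega
    · exact fun t ht => by simpa using (mem_filter.1 ht).1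
  calc T = #(range T) := (card_range T).symm
    _ ≤ #{t ∈ range T | u (x + t * p + 0) ≠ v (x + t * p + 0)} +
        #{t ∈ range T | u (x + t * p + n) ≠ v (x + t * p + n)} := by
      rw [← card_union_add_card_inter, ← filter_or]
      exact le_add_right (card_le_card fun t ht => mem_filter.2 ⟨ht, by simpa using hmismatch t⟩)
    _ ≤ 2 * Nat.count (fun y => u y ≠ v y) (x + T * p + n) := by
      linarith [hcount 0 (Nat.zero_le n), hcount n le_rfl]

lemma ham_shift_eq_count {n i : ℕ} (S : ℕ → α) (hi : 1 ≤ i) (hin : i ≤ n) {v : ℕ → α}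
    (hv : Periodic v n) :
    ham n S (fun m => v (m + (n - i))) = Nat.count (fun x => frag n S i (x + 1) ≠ v x) n := by
  rw [← card_filter_Icc_add_eq_count (periodic_ne (periodic_frag n S hi) hv) (n - i), ham, hamIcc]
  refine congrArg card (filter_congr fun m hm => ?_)
  have hm := mem_Icc.1 hm
  have : frag n S i (m + (n - i) + 1) = S m := by
    simp only [frag, cext]
    rw [show i + (m + (n - i) + 1) - 1 - 1 = m - 1 + 1 * n by omega, Nat.add_mul_mod_self_right,
      Nat.mod_eq_of_lt (by omega), Nat.sub_add_cancel hm.1]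
  rw [this]

lemma mem_tauSet_iff {n ℓ k : ℕ} {γ : ℝ} (hγk : γ * k ≠ 0) (hn : (n : ℝ) = 3 * γ * k * ℓ)
    (S : ℕ → α) (i τ : ℕ) :
    τ ∈ tauSet n ℓ k γ S i ↔
      1 ≤ τ ∧ τ < 3 * ℓ * Nat.count (fun x => frag n S i (x + 1) ≠ muExt n ℓ S i (x + 1)) τ := by
  have h3ℓ : (n : ℝ) / (γ * k) = 3 * ℓ := by
    rw [hn, div_eq_iff hγk]
    ring
  rw [tauSet, Set.mem_ofPred_eq, hamIcc_one_eq_count, h3ℓ]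
  norm_cast

/-- If the set were empty, mismatches against `μ_{S,i}*` would have density `≤ 1/(3ℓ)` on every
prefix. If `μ_{S,i}*` is `n`-periodic, reading it cyclically then gives a `(3γk, γk)`-base of `S`
(its period `gcd(ρ, n)` divides `n`); if not, mismatches have density about `1/(2ρ) ≥ 1/(2ℓ)`. -/
theorem tauSet_nonempty {n ℓ k i : ℕ} {γ : ℝ} {S : ℕ → α} (hk : 1 ≤ k) (hγ : 0 < γ)
    (hn : (n : ℝ) = 3 * γ * k * ℓ) (hS : ¬ PseudoPeriodic n (3 * γ * k) (γ * k) S)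
    (hi : i ∈ cubicSet n ℓ S) : (tauSet n ℓ k γ S i).Nonempty := by
  obtain ⟨⟨hi1, hin⟩, hρℓ⟩ : (1 ≤ i ∧ i ≤ n) ∧ rho n ℓ S i ≤ ℓ := by simpa [cubicSet] using hi
  have hk0 : (0 : ℝ) < k := by exact_mod_cast hk
  set ρ := rho n ℓ S i
  set v := fun x => muExt n ℓ S i (x + 1)
  set D := fun x => frag n S i (x + 1) ≠ v x
  have hρ : 1 ≤ ρ := one_le_rho n ℓ S i
  by_contra hempty
  have hsparse : ∀ τ, 3 * ℓ * Nat.count D τ ≤ τ := by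
    intro τ
    rcases Nat.eq_zero_or_pos τ with rfl | hτ
    · simp
    · by_contra! h
      exact hempty ⟨τ, (mem_tauSet_iff (by positivity) hn S i τ).2 ⟨hτ, h⟩⟩
  by_cases hvn : Periodic v n
  · apply hS
    have hg : Periodic v (ρ.gcd n) := (periodic_muExt n ℓ S i).nat_gcd hvn
    refine ⟨fun m => v (m + (n - i)), ?_, ?_⟩
    · have hroot : root n (fun m => v (m + (n - i))) ≤ ℓ :=
        (root_le (Nat.gcd_dvd_right ρ n) (isPeriod_of_periodic (hg.add_const _)
          (Nat.gcd_pos_of_pos_left n hρ))).trans ((Nat.gcd_le_left n hρ).trans hρℓ)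
      calc (root n (fun m => v (m + (n - i))) : ℝ) ≤ ℓ := by exact_mod_cast hroot
        _ = n / (3 * γ * k) := by rw [hn]; field_simp
    · rw [ham_shift_eq_count S hi1 hin hvn]
      have h := hsparse n
      have hℓ : (0 : ℝ) < ℓ := by exact_mod_cast (hρ.trans hρℓ)
      have : (3 * ℓ * Nat.count D n : ℝ) ≤ 3 * γ * k * ℓ := by rw [← hn]; exact_mod_cast h
      change (Nat.count D n : ℝ) ≤ γ * k
      nlinarith
  · obtain ⟨x, hx⟩ : ∃ x, v (x + n) ≠ v x := by simpa [Periodic] using hvn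
    set T := 2 * x + 2 * n + 1 with hT
    have h2 := le_two_mul_count_ne (periodic_frag n S hi1) (periodic_muExt n ℓ S i) hρ hx T
    change T ≤ 2 * Nat.count D (x + T * ρ + n) at h2
    have h3 := hsparse (x + T * ρ + n)
    have h4 : T * ρ ≤ T * ℓ := Nat.mul_le_mul_left T hρℓ
    have h5 := Nat.mul_le_mul_left (3 * ℓ) h2
    have h6 : T ≤ ℓ * T := Nat.le_mul_of_pos_left T (hρ.trans hρℓ)
    linarith

/-- `S'` is obtained from `S` by replacing some letters `S[m]` with the fresh symbol `$_m`. -/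
def IsSentinelMask (S : ℕ → α) (S' : ℕ → α ⊕ ℕ) : Prop :=
  ∀ m, S' m = .inl (S m) ∨ S' m = .inr m

def mergeWithSentinels (S1 S2 : ℕ → α) : ℕ → α ⊕ ℕ :=
  fun i => if S1 i = S2 i then .inl (S1 i) else .inr i

lemma isSentinelMask_merge_left (S1 S2 : ℕ → α) :
    IsSentinelMask S1 (mergeWithSentinels S1 S2) := fun m => by
  by_cases h : S1 m = S2 m <;> simp [mergeWithSentinels, h]

lemma isSentinelMask_merge_right (S1 S2 : ℕ → α) :
    IsSentinelMask S2 (mergeWithSentinels S1 S2) := fun m => by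
  by_cases h : S1 m = S2 m <;> simp [mergeWithSentinels, h]

namespace IsSentinelMask

variable {S : ℕ → α} {S' : ℕ → α ⊕ ℕ} {n ℓ : ℕ}

lemma cext_eq (h : IsSentinelMask S S') (n m : ℕ) :
    cext n S' m = .inl (cext n S m) ∨ cext n S' m = .inr ((m - 1) % n + 1) :=
  h _

lemma cext_eq_of_eq_inl (h : IsSentinelMask S S') {m : ℕ} {a : α}
    (hm : cext n S' m = .inl a) : cext n S m = a := by
  rcases h.cext_eq n m with h' | h' <;> rw [h'] at hm
  · exact Sum.inl_injective hm
  · exact absurd hm Sum.inr_ne_inl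

/-- A sentinel `$_r` occurs in `S'*` only at positions `≡ r (mod n)`, so a letter repeated at
distance `0 < p < n` is not a sentinel. -/
lemma cext_eq_inl_of_cext_add_eq (h : IsSentinelMask S S') {m p : ℕ} (hm : 1 ≤ m) (hp : 0 < p)
    (hpn : p < n) (heq : cext n S' m = cext n S' (m + p)) :
    cext n S' m = .inl (cext n S m) ∧ cext n S' (m + p) = .inl (cext n S (m + p)) := by
  rcases h.cext_eq n m with h₁ | h₁ <;> rcases h.cext_eq n (m + p) with h₂ | h₂ <;>
    rw [h₁, h₂] at heq
  · exact ⟨h₁, h₂⟩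
  · exact absurd heq Sum.inl_ne_inr
  · exact absurd heq Sum.inr_ne_inl
  · have hmod : m - 1 + p ≡ m - 1 + 0 [MOD n] := by
      simpa [Nat.ModEq, show m + p - 1 = m - 1 + p by omega] using (Sum.inr_injective heq).symm
    have := Nat.ModEq.add_left_cancel' _ hmod
    rw [Nat.ModEq, Nat.mod_eq_of_lt hpn, Nat.zero_mod] at this
    omega

/-- Every letter of a cubic window of `S'` recurs in the window at distance `ρ ≤ ℓ < n`. -/
lemma frag_eq_inl (h : IsSentinelMask S S') (hℓn : ℓ < n) {i : ℕ} (hi : 1 ≤ i)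
    (hρ : rho n ℓ S' i ≤ ℓ) {j : ℕ} (hj1 : 1 ≤ j) (hj : j ≤ 3 * ℓ) :
    frag n S' i j = .inl (frag n S i j) := by
  obtain ⟨hp1, hper⟩ : IsPeriod (3 * ℓ) (frag n S' i) (rho n ℓ S' i) := per_isPeriod _ _
  set p := rho n ℓ S' i
  rcases le_or_gt (j + p) (3 * ℓ) with hjp | hjp
  · have heq : cext n S' (i + j - 1) = cext n S' (i + j - 1 + p) := by
      rw [show i + j - 1 + p = i + (j + p) - 1 by omega]
      exact hper j hj1 hjp
    exact (h.cext_eq_inl_of_cext_add_eq (by omega) hp1 (by omega) heq).1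
  · have heq : cext n S' (i + (j - p) - 1) = cext n S' (i + (j - p) - 1 + p) := by
      rw [show i + (j - p) - 1 + p = i + (j - p + p) - 1 by omega]
      exact hper (j - p) (by omega) (by omega)
    have := (h.cext_eq_inl_of_cext_add_eq (by omega) hp1 (by omega) heq).2
    rwa [show i + (j - p) - 1 + p = i + j - 1 by omega] at this

lemma rho_eq (h : IsSentinelMask S S') (hℓn : ℓ < n) {i : ℕ} (hi : i ∈ cubicSet n ℓ S') :
    rho n ℓ S' i = rho n ℓ S i := by
  obtain ⟨⟨hi1, -⟩, hρ⟩ : (1 ≤ i ∧ i ≤ n) ∧ rho n ℓ S' i ≤ ℓ := by simpa [cubicSet] using hi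
  exact per_congr Sum.inl_injective fun j hj1 hj => h.frag_eq_inl hℓn hi1 hρ hj1 hj

lemma mem_cubicSet (h : IsSentinelMask S S') (hℓn : ℓ < n) {i : ℕ} (hi : i ∈ cubicSet n ℓ S') :
    i ∈ cubicSet n ℓ S := by
  have hρ := h.rho_eq hℓn hi
  simp only [cubicSet, mem_filter] at hi ⊢
  exact ⟨hi.1, hρ ▸ hi.2⟩

lemma muExt_eq (h : IsSentinelMask S S') (hℓn : ℓ < n) {i : ℕ} (hi : i ∈ cubicSet n ℓ S')
    (j : ℕ) : muExt n ℓ S' i j = .inl (muExt n ℓ S i j) := by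
  obtain ⟨⟨hi1, -⟩, hρ⟩ : (1 ≤ i ∧ i ≤ n) ∧ rho n ℓ S' i ≤ ℓ := by simpa [cubicSet] using hi
  have hr : (j - 1) % rho n ℓ S' i < rho n ℓ S' i := Nat.mod_lt _ (one_le_rho n ℓ S' i)
  have := h.frag_eq_inl hℓn hi1 hρ (j := (j - 1) % rho n ℓ S' i + 1) (by omega) (by omega)
  simp only [frag, show i + ((j - 1) % rho n ℓ S' i + 1) - 1 = i + (j - 1) % rho n ℓ S' i by omega]
    at this
  simpa only [muExt, h.rho_eq hℓn hi] using this

lemma tauSet_subset (h : IsSentinelMask S S') (hℓn : ℓ < n) {k : ℕ} {γ : ℝ} (hγ : 0 ≤ γ) {i : ℕ}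
    (hi : i ∈ cubicSet n ℓ S') : tauSet n ℓ k γ S i ⊆ tauSet n ℓ k γ S' i := by
  refine fun τ ⟨hτ, hlt⟩ => ⟨hτ, hlt.trans_le (mul_le_mul_of_nonneg_left ?_ (by positivity))⟩
  refine Nat.cast_le.2 (card_le_card fun j hj => ?_)
  simp only [mem_filter] at hj ⊢
  refine ⟨hj.1, fun heq => hj.2 (h.cext_eq_of_eq_inl ?_)⟩
  rwa [h.muExt_eq hℓn hi] at heq

lemma tau_le {k : ℕ} {γ : ℝ} (h : IsSentinelMask S S') (hk : 1 ≤ k) (hγ : 0 < γ) (hℓn : ℓ < n)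
    (hn : (n : ℝ) = 3 * γ * k * ℓ) (hS : ¬ PseudoPeriodic n (3 * γ * k) (γ * k) S) {i : ℕ}
    (hi : i ∈ cubicSet n ℓ S') : tau n ℓ k γ S' i ≤ tau n ℓ k γ S i :=
  Nat.sInf_le (h.tauSet_subset hℓn hγ.le hi
    (Nat.sInf_mem (tauSet_nonempty hk hγ hn hS (h.mem_cubicSet hℓn hi))))

lemma mem_Mset (h : IsSentinelMask S S') (hℓn : ℓ < n) {k : ℕ} {γ : ℝ} {i j : ℕ}
    (hi : i ∈ cubicSet n ℓ S') (htau : tau n ℓ k γ S' i ≤ tau n ℓ k γ S i)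
    (hj : j ∈ Mset n ℓ k γ S' i) {a : α} (ha : cext n S' j = .inl a) :
    j ∈ Mset n ℓ k γ S i := by
  simp only [Mset, Rset, mem_filter, mem_Icc] at hj ⊢
  refine ⟨⟨hj.1.1, by omega⟩, fun heq => hj.2 ?_⟩
  rw [ha, h.muExt_eq hℓn hi, ← heq, h.cext_eq_of_eq_inl ha]

end IsSentinelMask

lemma mem_fc {n ℓ k : ℕ} {γ : ℝ} {S : ℕ → α} {x : ℕ} :
    x ∈ fc n ℓ k γ S ↔ ∃ i ∈ cubicSet n ℓ S, ∃ j ∈ Mset n ℓ k γ S i, zwrap n j = x := by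
  simp [fc, bind, pure]

lemma zwrap_natCast (n : ℕ) {j : ℕ} (hj : 1 ≤ j) : zwrap n j = (j - 1) % n + 1 := by
  rw [zwrap, show (j : ℤ) - 1 = ((j - 1 : ℕ) : ℤ) by omega, ← Int.natCast_mod, Int.toNat_natCast]

lemma lt_of_natCast_eq_three_mul {n k ℓ : ℕ} {γ : ℝ} (hk : 1 ≤ k) (hγ : 1 ≤ γ) (hℓ : 1 ≤ ℓ)
    (hn : (n : ℝ) = 3 * γ * k * ℓ) : ℓ < n := by
  have hk : (1 : ℝ) ≤ k := by exact_mod_cast hk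
  have hℓ : (1 : ℝ) ≤ ℓ := by exact_mod_cast hℓ
  have hγk : 1 ≤ γ * k := by nlinarith
  have : (ℓ : ℝ) < n := by
    rw [hn]
    nlinarith
  exact_mod_cast this

lemma fc_merge_subset {n ℓ k : ℕ} {γ : ℝ} {S1 S2 : ℕ → α} (hk : 1 ≤ k) (hγ : 0 < γ) (hℓn : ℓ < n)
    (hn : (n : ℝ) = 3 * γ * k * ℓ) (hS1 : ¬ PseudoPeriodic n (3 * γ * k) (γ * k) S1)
    (hS2 : ¬ PseudoPeriodic n (3 * γ * k) (γ * k) S2) :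
    fc n ℓ k γ (mergeWithSentinels S1 S2) ⊆
      (fc n ℓ k γ S1 ∩ fc n ℓ k γ S2) ∪ {i ∈ Icc 1 n | S1 i ≠ S2 i} := by
  have hmask1 := isSentinelMask_merge_left S1 S2
  have hmask2 := isSentinelMask_merge_right S1 S2
  intro x hx
  obtain ⟨i, hi, j, hj, rfl⟩ := mem_fc.1 hx
  have hj1 : 1 ≤ j := by
    simp only [cubicSet, Mset, Rset, mem_filter, mem_Icc] at hi hj
    omega
  by_cases hr : S1 ((j - 1) % n + 1) = S2 ((j - 1) % n + 1)
  · have hcext : cext n (mergeWithSentinels S1 S2) j = .inl (S1 ((j - 1) % n + 1)) := by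
      simp [cext, mergeWithSentinels, hr]
    refine mem_union_left _ (mem_inter.2 ⟨mem_fc.2 ?_, mem_fc.2 ?_⟩)
    · exact ⟨i, hmask1.mem_cubicSet hℓn hi, j,
        hmask1.mem_Mset hℓn hi (hmask1.tau_le hk hγ hℓn hn hS1 hi) hj hcext, rfl⟩
    · exact ⟨i, hmask2.mem_cubicSet hℓn hi, j,
        hmask2.mem_Mset hℓn hi (hmask2.tau_le hk hγ hℓn hn hS2 hi) hj hcext, rfl⟩
  · rw [zwrap_natCast n hj1]
    exact mem_union_right _ (mem_filter.2 ⟨mem_Icc.2 ⟨by omega, Nat.mod_lt _ (by omega)⟩, hr⟩)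

theorem stmt14_general {α : Type*} (n k ℓ : ℕ) (γ : ℝ)
    (hk1 : 1 ≤ k) (hγ : 14 ≤ γ) (hℓ1 : 1 ≤ ℓ)
    (hn : (n : ℝ) = 3 * γ * k * ℓ)
    (S1 S2 : ℕ → α)
    (hS1 : ¬ PseudoPeriodic n (3 * γ * k) (γ * k) S1)
    (hS2 : ¬ PseudoPeriodic n (3 * γ * k) (γ * k) S2)
    (S' : ℕ → α ⊕ ℕ)
    (hS' : S' = fun i => if S1 i = S2 i then (Sum.inl (S1 i) : α ⊕ ℕ) else Sum.inr i) :
    cubicSet n ℓ S' ⊆ cubicSet n ℓ S1 ∧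
      (∀ i ∈ cubicSet n ℓ S', tau n ℓ k γ S' i ≤ tau n ℓ k γ S1 i) ∧
      fc n ℓ k γ S' ⊆ (fc n ℓ k γ S1 ∩ fc n ℓ k γ S2) ∪
        ((Finset.Icc 1 n).filter fun i => S1 i ≠ S2 i) := by
  subst hS'
  have hγ0 : 0 < γ := by linarith
  have hℓn : ℓ < n := lt_of_natCast_eq_three_mul hk1 (by linarith) hℓ1 hn
  have hmask1 := isSentinelMask_merge_left S1 S2
  exact ⟨fun i => hmask1.mem_cubicSet hℓn, fun i => hmask1.tau_le hk1 hγ0 hℓn hn hS1,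
    fc_merge_subset hk1 hγ0 hℓn hn hS1 hS2⟩

/-- Let `S1, S2 ∈ Σ^n \ H_{n,k}` with `Ham(S1,S2) ≤ k`, and let `S'` (over
`Σ ⊔ {$_1,…,$_n}`) agree with `S1` where `S1 = S2` and carry a fresh symbol `$_i`
elsewhere. Then `P(S') ⊆ P(S1)`, `τ_{S',i} ≤ τ_{S1,i}` for `i ∈ P(S')`, and
`f_c(S') ⊆ (f_c(S1) ∩ f_c(S2)) ∪ MP(S1,S2)`. -/
theorem stmt14 {α : Type*} (n k ℓ : ℕ) (γ : ℝ)
    (hk1 : 1 ≤ k) (hkn : k ≤ n) (hγ : 14 ≤ γ) (hℓ1 : 1 ≤ ℓ)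
    (hn : (n : ℝ) = 3 * γ * k * ℓ)
    (S1 S2 : ℕ → α)
    (hS1 : ¬ PseudoPeriodic n (3 * γ * k) (γ * k) S1)
    (hS2 : ¬ PseudoPeriodic n (3 * γ * k) (γ * k) S2)
    (hham : ham n S1 S2 ≤ k)
    (S' : ℕ → α ⊕ ℕ)
    (hS' : S' = fun i => if S1 i = S2 i then (Sum.inl (S1 i) : α ⊕ ℕ) else Sum.inr i) :
    cubicSet n ℓ S' ⊆ cubicSet n ℓ S1 ∧
      (∀ i ∈ cubicSet n ℓ S', tau n ℓ k γ S' i ≤ tau n ℓ k γ S1 i) ∧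
      fc n ℓ k γ S' ⊆ (fc n ℓ k γ S1 ∩ fc n ℓ k γ S2) ∪
        ((Finset.Icc 1 n).filter fun i => S1 i ≠ S2 i) :=
  stmt14_general n k ℓ γ hk1 hγ hℓ1 hn S1 S2 hS1 hS2 S' hS'
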